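/- Let μ and ν be Borel probability measures on ℝ^d with all moments finite. If for some n ∈ ℕ the optimal value ρ_n of the level-n semidefinite relaxation equals 2, then ‖μ − ν‖_TV = 2, i.e. μ and ν are mutually singular. -/

import Mathlib

open MeasureTheory Finset Filter

noncomputable section

/-- The monomial `x ↦ x^α`. -/
def mono (d : ℕ) (α : Fin d → ℕ) (x : Fin d → ℝ) : ℝ := ∏ i, x i ^ α i

/-- All moments of `μ` are finite. -/
def HasAllMoments {d : ℕ} (μ : Measure (Fin d → ℝ)) : Prop :=
  ∀ α : Fin d → ℕ, Integrable (mono d α) μ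

/-- The moment `μ_α = ∫ x^α dμ`. -/
def mMom {d : ℕ} (μ : Measure (Fin d → ℝ)) (α : Fin d → ℕ) : ℝ := ∫ x, mono d α x ∂μ

instance fintypeIdx (d n : ℕ) : Fintype {α : Fin d → ℕ // ∑ i, α i ≤ n} :=
  Fintype.ofInjective
    (fun a => (fun i => (⟨a.1 i,
        Nat.lt_succ_of_le (le_trans
          (Finset.single_le_sum (fun j _ => Nat.zero_le (a.1 j)) (Finset.mem_univ i)) a.2)⟩ :
        Fin (n+1))) : _ → (Fin d → Fin (n+1)))
    (fun a b h => by
      apply Subtype.ext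
      funext i
      exact congrArg Fin.val (congrFun h i))

/-- Moment matrix of order `n` built from a moment function `m`. -/
def momMat (d n : ℕ) (m : (Fin d → ℕ) → ℝ) :
    Matrix {α : Fin d → ℕ // ∑ i, α i ≤ n} {α : Fin d → ℕ // ∑ i, α i ≤ n} ℝ :=
  fun a b => m (a.1 + b.1)

/-- Carleman's condition. -/
def Carleman {d : ℕ} (μ : Measure (Fin d → ℝ)) : Prop :=
  ∀ i : Fin d, ¬ Summable (fun j : ℕ =>
    (∫ x, x i ^ (2 * (j + 1)) ∂μ) ^ (-(1 : ℝ) / (2 * (j + 1) : ℝ)))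

/-- Positive part of the Hahn–Jordan decomposition of `μ - ν`. -/
def hjPos {d : ℕ} (μ ν : Measure (Fin d → ℝ)) [IsFiniteMeasure μ] [IsFiniteMeasure ν] :
    Measure (Fin d → ℝ) :=
  (μ.toSignedMeasure - ν.toSignedMeasure).toJordanDecomposition.posPart

/-- Negative part of the Hahn–Jordan decomposition of `μ - ν`. -/
def hjNeg {d : ℕ} (μ ν : Measure (Fin d → ℝ)) [IsFiniteMeasure μ] [IsFiniteMeasure ν] :
    Measure (Fin d → ℝ) :=
  (μ.toSignedMeasure - ν.toSignedMeasure).toJordanDecomposition.negPart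

/-- Total variation distance `‖μ - ν‖_TV` (as a real number). -/
def tvReal {d : ℕ} (μ ν : Measure (Fin d → ℝ)) [IsFiniteMeasure μ] [IsFiniteMeasure ν] : ℝ :=
  (hjPos μ ν Set.univ + hjNeg μ ν Set.univ).toReal

/-- Degree-`2n` pseudo-moment vectors. -/
abbrev PV (d n : ℕ) := {α : Fin d → ℕ // ∑ i, α i ≤ 2 * n} → ℝ

/-- Moment matrix of a degree-`2n` pseudo-moment vector. -/
def pvMat (d n : ℕ) (φ : PV d n) :
    Matrix {α : Fin d → ℕ // ∑ i, α i ≤ n} {α : Fin d → ℕ // ∑ i, α i ≤ n} ℝ :=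
  fun a b => φ ⟨a.1 + b.1, by
    have h : ∑ i, (a.1 + b.1) i = (∑ i, a.1 i) + ∑ i, b.1 i := by
      simp [Finset.sum_add_distrib]
    have ha := a.2
    have hb := b.2
    omega⟩

/-- The index `α = 0`. -/
def zeroIdx (d n : ℕ) : {α : Fin d → ℕ // ∑ i, α i ≤ 2 * n} := ⟨0, by simp⟩

/-- Feasibility for the level-`n` semidefinite relaxation. -/
def Feas (d n : ℕ) (μ ν : Measure (Fin d → ℝ)) (φ ψ : PV d n) : Prop :=
  (∀ α, φ α - ψ α = mMom μ α.1 - mMom ν α.1) ∧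
  (pvMat d n φ).PosSemidef ∧ (momMat d n (mMom μ) - pvMat d n φ).PosSemidef ∧
  (pvMat d n ψ).PosSemidef ∧ (momMat d n (mMom ν) - pvMat d n ψ).PosSemidef

/-- Values of the level-`n` semidefinite relaxation. -/
def primalSet (d n : ℕ) (μ ν : Measure (Fin d → ℝ)) : Set ℝ :=
  {r | ∃ φ ψ : PV d n, Feas d n μ ν φ ψ ∧ r = φ (zeroIdx d n) + ψ (zeroIdx d n)}

/-- The optimal value `ρ_n` of the level-`n` semidefinite relaxation. -/
def rho (d n : ℕ) (μ ν : Measure (Fin d → ℝ)) : ℝ := sInf (primalSet d n μ ν)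

/-! By the Hahn decomposition, the Jordan parts of `μ - ν` are the truncated differences `μ - ν`
and `ν - μ`, which lie below `μ` and `ν` respectively. Their moment vectors are therefore a feasible
point of the relaxation, of value `‖μ - ν‖_TV`, so `ρ_n ≤ ‖μ - ν‖_TV ≤ 2`. If `ρ_n = 2`, both parts
have full mass, hence `μ - ν = μ` and `ν - μ = ν`, and these are mutually singular. -/

open Matrix

lemma mono_zero {d : ℕ} (x : Fin d → ℝ) : mono d 0 x = 1 := by simp [mono]

lemma mono_add {d : ℕ} (α β : Fin d → ℕ) (x : Fin d → ℝ) :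
    mono d (α + β) x = mono d α x * mono d β x := by
  simp [mono, pow_add, Finset.prod_mul_distrib]

lemma HasAllMoments.mono_measure {d : ℕ} {κ μ : Measure (Fin d → ℝ)} (hμ : HasAllMoments μ)
    (hκμ : κ ≤ μ) : HasAllMoments κ :=
  fun α => (hμ α).mono_measure hκμ

lemma mMom_zero {d : ℕ} (κ : Measure (Fin d → ℝ)) : mMom κ 0 = κ.real Set.univ := by
  simp [mMom, mono_zero]

lemma mMom_add_measure {d : ℕ} {κ μ : Measure (Fin d → ℝ)} (hκ : HasAllMoments κ)
    (hμ : HasAllMoments μ) (α : Fin d → ℕ) : mMom (κ + μ) α = mMom κ α + mMom μ α :=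
  integral_add_measure (hκ α) (hμ α)

lemma dotProduct_momMat_mulVec {d n : ℕ} {κ : Measure (Fin d → ℝ)} (hκ : HasAllMoments κ)
    (x : {α : Fin d → ℕ // ∑ i, α i ≤ n} → ℝ) :
    x ⬝ᵥ momMat d n (mMom κ) *ᵥ x = ∫ y, (∑ a, x a * mono d a.1 y) ^ 2 ∂κ := by
  have hterm : ∀ a b : {α : Fin d → ℕ // ∑ i, α i ≤ n},
      (fun y => x a * mono d a.1 y * (x b * mono d b.1 y))
        = fun y => x a * x b * mono d (a.1 + b.1) y := by
    intro a b; funext y; rw [mono_add]; ring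
  simp_rw [sq, Finset.sum_mul_sum]
  rw [integral_finsetSum _ fun a _ => integrable_finsetSum _ fun b _ => by
    rw [hterm]; exact (hκ _).const_mul _]
  refine Finset.sum_congr rfl fun a _ => ?_
  rw [integral_finsetSum _ fun b _ => by rw [hterm]; exact (hκ _).const_mul _,
    mulVec, dotProduct, Finset.mul_sum]
  refine Finset.sum_congr rfl fun b _ => ?_
  rw [hterm, integral_const_mul]
  simp only [momMat, mMom]
  ring

lemma momMat_posSemidef {d n : ℕ} {κ : Measure (Fin d → ℝ)} (hκ : HasAllMoments κ) :
    (momMat d n (mMom κ)).PosSemidef := by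
  refine PosSemidef.of_dotProduct_mulVec_nonneg ?_ fun x => ?_
  · ext a b
    simp [momMat, conjTranspose_apply, add_comm]
  · rw [star_trivial, dotProduct_momMat_mulVec hκ]
    exact integral_nonneg fun y => sq_nonneg _

lemma momMat_sub_posSemidef_of_le {d n : ℕ} {κ μ : Measure (Fin d → ℝ)} [IsFiniteMeasure κ]
    (hμ : HasAllMoments μ) (hκμ : κ ≤ μ) :
    (momMat d n (mMom μ) - momMat d n (mMom κ)).PosSemidef := by
  have hκ := hμ.mono_measure hκμ
  have hrest := hμ.mono_measure (Measure.sub_le (ν := κ))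
  have hsplit : momMat d n (mMom μ) - momMat d n (mMom κ) = momMat d n (mMom (μ - κ)) := by
    ext a b
    conv_lhs => rw [← Measure.sub_add_cancel_of_le hκμ]
    simp only [Matrix.sub_apply, momMat, mMom_add_measure hrest hκ]
    ring
  rw [hsplit]
  exact momMat_posSemidef hrest

lemma MeasureTheory.Measure.add_sub_eq_add_sub {X : Type*} [MeasurableSpace X] (μ ν : Measure X)
    [IsFiniteMeasure μ] [IsFiniteMeasure ν] : μ + (ν - μ) = ν + (μ - ν) := by
  rw [← Measure.toSignedMeasure_eq_toSignedMeasure_iff, Measure.toSignedMeasure_add,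
    Measure.toSignedMeasure_add, add_comm ν.toSignedMeasure, ← sub_eq_sub_iff_add_eq_add]
  exact Measure.sub_toSignedMeasure_eq_toSignedMeasure_sub

lemma hjPos_eq {d : ℕ} (μ ν : Measure (Fin d → ℝ)) [IsFiniteMeasure μ] [IsFiniteMeasure ν] :
    hjPos μ ν = μ - ν := by
  simp [hjPos, Measure.jordanDecompositionOfToSignedMeasureSub_posPart]

lemma hjNeg_eq {d : ℕ} (μ ν : Measure (Fin d → ℝ)) [IsFiniteMeasure μ] [IsFiniteMeasure ν] :
    hjNeg μ ν = ν - μ := by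
  simp [hjNeg, Measure.jordanDecompositionOfToSignedMeasureSub_negPart]

lemma tvReal_eq {d : ℕ} (μ ν : Measure (Fin d → ℝ)) [IsFiniteMeasure μ] [IsFiniteMeasure ν] :
    tvReal μ ν = (μ - ν).real Set.univ + (ν - μ).real Set.univ := by
  rw [tvReal, hjPos_eq, hjNeg_eq, ENNReal.toReal_add (measure_ne_top _ _) (measure_ne_top _ _)]
  rfl

lemma measureReal_univ_le_one_of_le {X : Type*} [MeasurableSpace X] {κ μ : Measure X}
    [IsProbabilityMeasure μ] (hκμ : κ ≤ μ) : κ.real Set.univ ≤ 1 := by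
  simpa [Measure.real] using ENNReal.toReal_mono (measure_ne_top μ _) (hκμ Set.univ)

lemma eq_of_le_of_measureReal_univ_eq_one {X : Type*} [MeasurableSpace X] {κ μ : Measure X}
    [IsFiniteMeasure κ] [IsProbabilityMeasure μ] (hκμ : κ ≤ μ) (hκ : κ.real Set.univ = 1) :
    κ = μ := by
  refine Measure.eq_of_le_of_measure_univ_eq hκμ ?_
  rw [measure_univ (μ := μ), ← ENNReal.toReal_eq_one_iff]
  exact hκ

lemma tvReal_le_two {d : ℕ} (μ ν : Measure (Fin d → ℝ)) [IsProbabilityMeasure μ]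
    [IsProbabilityMeasure ν] : tvReal μ ν ≤ 2 := by
  rw [tvReal_eq]
  linarith [measureReal_univ_le_one_of_le (Measure.sub_le (μ := μ) (ν := ν)),
    measureReal_univ_le_one_of_le (Measure.sub_le (μ := ν) (ν := μ))]

lemma feas_mMom_sub {d : ℕ} (n : ℕ) {μ ν : Measure (Fin d → ℝ)} [IsFiniteMeasure μ]
    [IsFiniteMeasure ν] (hμ : HasAllMoments μ) (hν : HasAllMoments ν) :
    Feas d n μ ν (fun α => mMom (μ - ν) α.1) (fun α => mMom (ν - μ) α.1) := by
  have hμν := hμ.mono_measure (Measure.sub_le (ν := ν))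
  have hνμ := hν.mono_measure (Measure.sub_le (ν := μ))
  refine ⟨fun α => ?_, momMat_posSemidef hμν, momMat_sub_posSemidef_of_le hμ Measure.sub_le,
    momMat_posSemidef hνμ, momMat_sub_posSemidef_of_le hν Measure.sub_le⟩
  have := congrArg (mMom · α.1) (Measure.add_sub_eq_add_sub μ ν)
  simp only [mMom_add_measure hμ hνμ, mMom_add_measure hν hμν] at this
  linarith

lemma primalSet_nonneg {d n : ℕ} {μ ν : Measure (Fin d → ℝ)} {r : ℝ}
    (hr : r ∈ primalSet d n μ ν) : 0 ≤ r := by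
  obtain ⟨φ, ψ, ⟨-, hφ, -, hψ, -⟩, rfl⟩ := hr
  exact add_nonneg (hφ.diag_nonneg (i := ⟨0, by simp⟩)) (hψ.diag_nonneg (i := ⟨0, by simp⟩))

lemma rho_le_tvReal {d : ℕ} (n : ℕ) {μ ν : Measure (Fin d → ℝ)} [IsFiniteMeasure μ]
    [IsFiniteMeasure ν] (hμ : HasAllMoments μ) (hν : HasAllMoments ν) :
    rho d n μ ν ≤ tvReal μ ν := by
  refine csInf_le ⟨0, fun r => primalSet_nonneg⟩ ⟨_, _, feas_mMom_sub n hμ hν, ?_⟩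
  simp only [zeroIdx, tvReal_eq, mMom_zero]

/-- If for some `n` the optimal value `ρ_n` of the level-`n` semidefinite
relaxation equals `2`, then `‖μ - ν‖_TV = 2`, i.e. the two probability measures `μ` and `ν`
are mutually singular. -/
theorem rho_eq_two_imp_mutuallySingular (d n : ℕ) (μ ν : Measure (Fin d → ℝ))
    [IsProbabilityMeasure μ] [IsProbabilityMeasure ν]
    (hμ : HasAllMoments μ) (hν : HasAllMoments ν)
    (h : rho d n μ ν = 2) :
    tvReal μ ν = 2 ∧ μ ⟂ₘ ν := by
  have htv : tvReal μ ν = 2 :=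
    le_antisymm (tvReal_le_two μ ν) (h ▸ rho_le_tvReal n hμ hν)
  have hμν := measureReal_univ_le_one_of_le (Measure.sub_le (μ := μ) (ν := ν))
  have hνμ := measureReal_univ_le_one_of_le (Measure.sub_le (μ := ν) (ν := μ))
  have hμ_eq : μ - ν = μ :=
    eq_of_le_of_measureReal_univ_eq_one Measure.sub_le (by linarith [tvReal_eq μ ν])
  have hν_eq : ν - μ = ν :=
    eq_of_le_of_measureReal_univ_eq_one Measure.sub_le (by linarith [tvReal_eq μ ν])
  refine ⟨htv, ?_⟩
  simpa only [hμ_eq, hν_eq] using Measure.mutually_singular_measure_sub (μ := μ) (ν := ν)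

end
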